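/- Let F(x) ∈ 𝓞[x] be a monic irreducible polynomial of degree n with root θ ∈ K̄, of depth r, and let m_1 < ⋯ < m_r < n be its Okutsu degrees. Let F_1(x), …, F_r(x) ∈ 𝓞[x] be monic polynomials with deg F_i = m_i for all 1 ≤ i ≤ r. Then [F_1, …, F_r] is an Okutsu frame of F if and only if each F_i(x) is a divisor polynomial of F of degree m_i. -/

import Mathlib

open Polynomial

noncomputable section

/-- A local field `K` of characteristic zero, presented through the canonical extension `v`
of its normalized discrete valuation (additively written, `v(K*) = ℤ`) to a fixed algebraic
closure of `K`.  The axioms state that `v` is an additive valuation on the algebraic closure,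
that its restriction to `K` is a surjective discrete valuation onto `ℤ` (plus `⊤` at `0`),
that it is invariant under `K`-automorphisms (a property of the canonical extension), that
`K` is complete and that its residue field is finite. -/
structure OkutsuSetup (K : Type) [Field K] [CharZero K] : Type where
  v : AlgebraicClosure K → WithTop ℚ
  v_eq_top_iff : ∀ x, v x = ⊤ ↔ x = 0
  v_mul : ∀ x y, v (x * y) = v x + v y
  v_min_le_add : ∀ x y, min (v x) (v y) ≤ v (x + y)
  v_neg : ∀ x, v (-x) = v x
  v_one : v 1 = 0
  v_base_int : ∀ x : K, x ≠ 0 →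
    ∃ k : ℤ, v (algebraMap K (AlgebraicClosure K) x) = ((k : ℚ) : WithTop ℚ)
  v_base_one : ∃ x : K, v (algebraMap K (AlgebraicClosure K) x) = ((1 : ℚ) : WithTop ℚ)
  v_aut_invariant : ∀ (M : IntermediateField K (AlgebraicClosure K)) (σ : ↥M ≃ₐ[K] ↥M)
    (x : ↥M), v ((σ x : ↥M) : AlgebraicClosure K) = v ((x : ↥M) : AlgebraicClosure K)
  complete : ∀ a : ℕ → K,
    (∀ N : ℚ, ∃ M : ℕ, ∀ p q : ℕ, M ≤ p → M ≤ q →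
      ((N : ℚ) : WithTop ℚ) < v (algebraMap K (AlgebraicClosure K) (a p - a q))) →
    ∃ b : K, ∀ N : ℚ, ∃ M : ℕ, ∀ p : ℕ, M ≤ p →
      ((N : ℚ) : WithTop ℚ) < v (algebraMap K (AlgebraicClosure K) (a p - b))
  finite_residue : ∃ T : Finset K, ∀ x : K,
    0 ≤ v (algebraMap K (AlgebraicClosure K) x) →
    ∃ y ∈ T, 0 < v (algebraMap K (AlgebraicClosure K) (x - y))

namespace OkutsuSetup

variable {K : Type} [Field K] [CharZero K]

/-- The valuation of `K` itself. -/
def vK (S : OkutsuSetup K) (x : K) : WithTop ℚ :=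
  S.v (algebraMap K (AlgebraicClosure K) x)

/-- The ring of integers `𝓞` of `K`. -/
def integers (S : OkutsuSetup K) : Subring K where
  carrier := {x : K | 0 ≤ S.vK x}
  zero_mem' := by
    show (0 : WithTop ℚ) ≤ S.vK 0
    unfold vK
    rw [map_zero, (S.v_eq_top_iff 0).mpr rfl]
    exact le_top
  one_mem' := by
    show (0 : WithTop ℚ) ≤ S.vK 1
    unfold vK
    rw [map_one, S.v_one]
  add_mem' := by
    intro a b ha hb
    show (0 : WithTop ℚ) ≤ S.vK (a + b)
    unfold vK
    rw [map_add]
    exact le_trans (le_min ha hb) (S.v_min_le_add _ _)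
  mul_mem' := by
    intro a b ha hb
    show (0 : WithTop ℚ) ≤ S.vK (a * b)
    unfold vK
    rw [map_mul, S.v_mul]
    exact add_nonneg ha hb
  neg_mem' := by
    intro a ha
    show (0 : WithTop ℚ) ≤ S.vK (-a)
    unfold vK
    rw [map_neg, S.v_neg]
    exact ha

/-- The maximal ideal `𝔪` of the ring of integers of `K`. -/
def maximalIdeal (S : OkutsuSetup K) : Ideal S.integers where
  carrier := {x : S.integers | 0 < S.vK (x : K)}
  zero_mem' := by
    show (0 : WithTop ℚ) < S.vK ((0 : S.integers) : K)
    have h0 : ((0 : S.integers) : K) = (0 : K) := rfl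
    rw [h0]
    unfold vK
    rw [map_zero, (S.v_eq_top_iff 0).mpr rfl]
    exact WithTop.coe_lt_top 0
  add_mem' := by
    intro a b ha hb
    show (0 : WithTop ℚ) < S.vK ((a : K) + (b : K))
    refine lt_of_lt_of_le (lt_min ha hb) ?_
    unfold vK
    rw [map_add]
    exact S.v_min_le_add _ _
  smul_mem' := by
    intro c x hx
    show (0 : WithTop ℚ) < S.vK ((c : K) * (x : K))
    unfold vK
    rw [map_mul, S.v_mul]
    calc (0 : WithTop ℚ) < S.v (algebraMap K (AlgebraicClosure K) (x : K)) := hx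
    _ ≤ _ + _ := le_add_of_nonneg_left c.2

/-- The residue field `𝓞/𝔪` of `K`. -/
abbrev Residue (S : OkutsuSetup K) : Type :=
  S.integers ⧸ S.maximalIdeal

/-- The residue characteristic of `K`. -/
def resChar (S : OkutsuSetup K) : ℕ :=
  ringChar S.Residue

/-- Reduction of a polynomial with integer coefficients modulo `𝔪`. -/
def reduce (S : OkutsuSetup K) (F : Polynomial S.integers) : Polynomial S.Residue :=
  F.map (Ideal.Quotient.mk S.maximalIdeal)

/-- Evaluation of a polynomial with coefficients in `𝓞` at a point of the algebraic
closure of `K`. -/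
def evalK (S : OkutsuSetup K) (F : Polynomial S.integers) (θ : AlgebraicClosure K) :
    AlgebraicClosure K :=
  Polynomial.aeval θ (F.map S.integers.subtype)

/-- `v(g)` for a polynomial `g`: the minimum of the valuations of its coefficients. -/
def vPoly (S : OkutsuSetup K) (g : Polynomial S.integers) : WithTop ℚ :=
  (Finset.range (g.natDegree + 1)).inf fun i => S.vK ((g.coeff i : K))

/-- The ramification index `e(E/K)` of a finite subextension `E` of `K̄/K`: the least
positive integer `e` such that all values of `v` on `E*` lie in `(1/e)ℤ`. -/
def ramIdx (S : OkutsuSetup K) (E : IntermediateField K (AlgebraicClosure K)) : ℕ :=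
  sInf {e : ℕ | 0 < e ∧ ∀ x ∈ E, x ≠ (0 : AlgebraicClosure K) →
    ∃ k : ℤ, S.v x = (((k : ℚ) / (e : ℚ) : ℚ) : WithTop ℚ)}

/-- The residual degree `f(E/K)` of a finite subextension `E` of `K̄/K`; since `K` is a
complete discretely valued field, `[E : K] = e(E/K)·f(E/K)`. -/
def resDeg (S : OkutsuSetup K) (E : IntermediateField K (AlgebraicClosure K)) : ℕ :=
  Module.finrank K E / S.ramIdx E

/-- A subextension `E/K` is tamely ramified when its ramification index is prime to the
residue characteristic of `K`. -/
def IsTame (S : OkutsuSetup K) (E : IntermediateField K (AlgebraicClosure K)) : Prop :=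
  Nat.Coprime (S.ramIdx E) S.resChar

/-- The Okutsu invariants `m_0 = 1 ≤ m_1 < ⋯ < m_r < m_{r+1} = n` and
`μ_0 = 0 < μ_1 < ⋯ < μ_r < μ_{r+1} = ∞` of a monic irreducible polynomial of degree `n`
with root `θ`:  `m i` is the least `[K(η):K]` over `η` with `v(θ-η) > μ (i-1)`, and
`μ i` is the greatest value of `v(θ-η)` over `η` with `[K(η):K] = m i`.
`r` is the depth: the number of indices `i ≥ 1` with `m i < n`. -/
structure OkutsuData (S : OkutsuSetup K) (θ : AlgebraicClosure K) (n : ℕ) : Type where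
  r : ℕ
  m : ℕ → ℕ
  μ : ℕ → WithTop ℚ
  m_zero : m 0 = 1
  mu_zero : μ 0 = 0
  m_isLeast : ∀ i, 1 ≤ i → i ≤ r + 1 →
    IsLeast {d : ℕ | ∃ η : AlgebraicClosure K,
      (minpoly K η).natDegree = d ∧ μ (i - 1) < S.v (θ - η)} (m i)
  mu_isGreatest : ∀ i, 1 ≤ i → i ≤ r + 1 →
    IsGreatest {c : WithTop ℚ | ∃ η : AlgebraicClosure K,
      (minpoly K η).natDegree = m i ∧ S.v (θ - η) = c} (μ i)
  m_lt_n : ∀ i, 1 ≤ i → i ≤ r → m i < n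
  m_last : m (r + 1) = n

/-- `[F_1, …, F_r]` is an Okutsu frame of the monic irreducible polynomial with root `θ`
and Okutsu invariants `D`: for each `1 ≤ i ≤ r`, `F_i` is the minimal polynomial of some
`α_i ∈ K̄` with `[K(α_i):K] = m_i` and `v(θ - α_i) = μ_i`. -/
def IsFrame (S : OkutsuSetup K) {θ : AlgebraicClosure K} {n : ℕ} (D : OkutsuData S θ n)
    (Fr : ℕ → Polynomial S.integers) : Prop :=
  ∀ i, 1 ≤ i → i ≤ D.r → ∃ α : AlgebraicClosure K,
    (minpoly K α).natDegree = D.m i ∧ S.v (θ - α) = D.μ i ∧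
      (Fr i).map S.integers.subtype = minpoly K α

/-- `φ` is a Montes approximation to the monic irreducible polynomial `F`:  a monic
irreducible polynomial of the same degree `n` having a root `α` with `v(θ - α) > μ_r`,
where `θ` is a root of `F`. -/
def IsMontesApprox (S : OkutsuSetup K) (F φ : Polynomial S.integers) : Prop :=
  φ.Monic ∧ Irreducible (φ.map S.integers.subtype) ∧ φ.natDegree = F.natDegree ∧
    ∃ θ : AlgebraicClosure K, S.evalK F θ = 0 ∧
      ∃ D : OkutsuData S θ F.natDegree, ∃ α : AlgebraicClosure K,
        S.evalK φ α = 0 ∧ D.μ D.r < S.v (θ - α)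

end OkutsuSetup

/-!
Everything is measured through `v(F(β))`, `β ∈ K̄`. Since `v` is Galois invariant, the
valuation of a resultant gives `n · v(φ(θ)) = deg β · v(F(β))` for the minimal polynomial `φ`
of `β`. The Okutsu invariants bound `v(F(β)) ≤ V_i := ∑_ρ min(v(θ - ρ), μ_i)` whenever
`deg β ≤ m_i`, with equality only if a conjugate of `β` lies at distance `μ_i` from `θ`.
Factoring `g` into minimal polynomials and bounding its Gauss valuation from below gives
`n · v(g(θ)) ≤ n · v(g) + deg g · V_i` for `deg g ≤ m_i`; for the minimal polynomial of an `α`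
of degree `m_i` with `v(θ - α) = μ_i` this is an equality, which is the forward implication.
Conversely a divisor polynomial `F_i` attains the bound, which forces an irreducible factor of
`F_i` to have a root at distance `μ_i` from `θ`, hence degree `m_i`: so `F_i` is that factor.
-/

namespace WithTop

variable {α : Type*} [AddCommMonoid α] [LinearOrder α] [IsOrderedCancelAddMonoid α]

lemma nsmul_le_nsmul_iff_right {k : ℕ} (hk : k ≠ 0) {a b : WithTop α} :
    k • a ≤ k • b ↔ a ≤ b := by
  obtain ⟨k, rfl⟩ := Nat.exists_eq_succ_of_ne_zero hk
  have htop : (k + 1) • (⊤ : WithTop α) = ⊤ := rfl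
  cases b with
  | top => simp [htop]
  | coe b =>
    cases a with
    | top => simp only [htop, top_le_iff, ← WithTop.coe_nsmul, WithTop.coe_ne_top]
    | coe a =>
      rw [← WithTop.coe_nsmul, ← WithTop.coe_nsmul, WithTop.coe_le_coe, WithTop.coe_le_coe]
      exact _root_.nsmul_le_nsmul_iff_right hk

lemma eq_of_add_le_add {a b c d : WithTop α} (hab : a ≤ b) (hcd : c ≤ d) (hd : d ≠ ⊤)
    (h : b + d ≤ a + c) : a = b :=
  le_antisymm hab <| not_lt.mp fun hlt =>
    h.not_gt (WithTop.add_lt_add_of_lt_of_le (ne_top_of_le_ne_top hd hcd) hlt hcd)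

end WithTop

namespace AddValuation

variable {R Γ₀ : Type*} [CommRing R] [LinearOrderedAddCommMonoidWithTop Γ₀]
  (v : AddValuation R Γ₀)

lemma map_multiset_prod (s : Multiset R) : v s.prod = (s.map v).sum := by
  induction s using Multiset.induction with
  | empty => simp
  | cons a s ih => simp [v.map_mul, ih]

lemma map_sub_eq_min_of_map_sub_le {a c : R} (h : v (a - c) ≤ v a) :
    v (a - c) = min (v c) (v a) := by
  rcases lt_or_ge (v c) (v a) with hlt | hge
  · rw [min_eq_left hlt.le, v.map_sub_eq_of_lt_right hlt]
  · rw [min_eq_right hge]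
    exact le_antisymm h ((le_min le_rfl hge).trans (v.map_sub a c))

end AddValuation

section Conjugates

variable {K : Type*} [Field K]

local notation "K̄" => AlgebraicClosure K

lemma exists_algEquiv_apply_eq_of_mem_aroots_minpoly {x y : K̄}
    (hy : y ∈ (minpoly K x).aroots K̄) : ∃ σ : K̄ ≃ₐ[K] K̄, σ x = y :=
  minpoly.exists_algEquiv_of_root' (Algebra.IsAlgebraic.isAlgebraic x) (mem_aroots.mp hy).2

lemma algEquiv_apply_mem_aroots_minpoly (σ : K̄ ≃ₐ[K] K̄) {x y : K̄}
    (hy : y ∈ (minpoly K x).aroots K̄) : σ y ∈ (minpoly K x).aroots K̄ := by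
  rw [mem_aroots] at hy ⊢
  exact ⟨hy.1, by rw [aeval_algHom_apply, hy.2, map_zero]⟩

lemma sum_map_aroots_minpoly_of_invariant {M : Type*} [AddCommMonoid M] (x : K̄) (f : K̄ → M)
    (hf : ∀ (σ : K̄ ≃ₐ[K] K̄) y, f (σ y) = f y) :
    (((minpoly K x).aroots K̄).map f).sum = (minpoly K x).natDegree • f x := by
  have hconst : ∀ y ∈ (minpoly K x).aroots K̄, f y = f x := by
    intro y hy
    obtain ⟨σ, rfl⟩ := exists_algEquiv_apply_eq_of_mem_aroots_minpoly hy
    exact hf σ x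
  rw [Multiset.map_congr rfl hconst, Multiset.map_const', Multiset.sum_replicate,
    IsAlgClosed.card_aroots_eq_natDegree]

end Conjugates

namespace OkutsuSetup

variable {K : Type} [Field K] [CharZero K] (S : OkutsuSetup K)

local notation "K̄" => AlgebraicClosure K

/-- `v` bundled as an `AddValuation`, to use that API. -/
def val : AddValuation K̄ (WithTop ℚ) :=
  AddValuation.of S.v ((S.v_eq_top_iff 0).mpr rfl) S.v_one S.v_min_le_add S.v_mul

@[simp]
lemma val_apply (x : K̄) : S.val x = S.v x := rfl

@[simp]
lemma v_zero : S.v 0 = ⊤ :=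
  (S.v_eq_top_iff 0).mpr rfl

lemma v_algEquiv (σ : K̄ ≃ₐ[K] K̄) (x : K̄) : S.v (σ x) = S.v x := by
  let σ' : (⊤ : IntermediateField K K̄) ≃ₐ[K] (⊤ : IntermediateField K K̄) :=
    (IntermediateField.topEquiv.trans σ).trans IntermediateField.topEquiv.symm
  exact S.v_aut_invariant ⊤ σ' ⟨x, trivial⟩

lemma v_aeval_algEquiv (σ : K̄ ≃ₐ[K] K̄) (x : K̄) (P : K[X]) :
    S.v (aeval (σ x) P) = S.v (aeval x P) := by
  rw [aeval_algHom_apply, S.v_algEquiv]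

lemma v_eq_of_mem_aroots_minpoly {x y : K̄} (hy : y ∈ (minpoly K x).aroots K̄) :
    S.v y = S.v x := by
  obtain ⟨σ, rfl⟩ := exists_algEquiv_apply_eq_of_mem_aroots_minpoly hy
  exact S.v_algEquiv σ x

lemma v_aeval_eq_sum_aroots {P : K[X]} (hP : P.Monic) (x : K̄) :
    S.v (aeval x P) = ((P.aroots K̄).map fun ρ => S.v (x - ρ)).sum := by
  have hsplit : P.map (algebraMap K K̄) = ((P.aroots K̄).map fun ρ => X - C ρ).prod :=
    (IsAlgClosed.splits _).eq_prod_roots_of_monic (hP.map _)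
  rw [aeval_def, ← eval_map, hsplit, eval_multiset_prod, Multiset.map_map, ← val_apply,
    S.val.map_multiset_prod, Multiset.map_map]
  simp [Function.comp_def]

/-- The valuation of the resultant of two minimal polynomials, computed from either side. -/
lemma natDegree_nsmul_v_aeval_minpoly_comm (x y : K̄) :
    (minpoly K x).natDegree • S.v (aeval x (minpoly K y))
      = (minpoly K y).natDegree • S.v (aeval y (minpoly K x)) := by
  have hmonic : ∀ z : K̄, (minpoly K z).Monic :=
    fun z => minpoly.monic (Algebra.IsIntegral.isIntegral (R := K) z)
  have hinv : ∀ z : K̄, ∀ (σ : K̄ ≃ₐ[K] K̄) w,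
      S.v (aeval (σ w) (minpoly K z)) = S.v (aeval w (minpoly K z)) :=
    fun z σ w => S.v_aeval_algEquiv σ w _
  rw [← sum_map_aroots_minpoly_of_invariant x (fun w => S.v (aeval w (minpoly K y))) (hinv y),
    ← sum_map_aroots_minpoly_of_invariant y (fun w => S.v (aeval w (minpoly K x))) (hinv x)]
  simp only [S.v_aeval_eq_sum_aroots (hmonic _)]
  rw [Multiset.sum_map_sum_map]
  simp only [← val_apply, S.val.map_sub_swap]

def gaussVal (q : K̄[X]) : WithTop ℚ :=
  (Finset.range (q.natDegree + 1)).inf fun j => S.v (q.coeff j)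

variable {S}

lemma le_gaussVal {q : K̄[X]} {c : WithTop ℚ} (h : ∀ j, c ≤ S.v (q.coeff j)) :
    c ≤ S.gaussVal q :=
  Finset.le_inf fun j _ => h j

lemma gaussVal_le_v_coeff (q : K̄[X]) (j : ℕ) : S.gaussVal q ≤ S.v (q.coeff j) := by
  rcases le_or_gt j q.natDegree with hj | hj
  · exact Finset.inf_le (Finset.mem_range.mpr (Nat.lt_succ_of_le hj))
  · rw [coeff_eq_zero_of_natDegree_lt hj, v_zero]
    exact le_top

lemma gaussVal_C (a : K̄) : S.gaussVal (C a) = S.v a := by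
  simp [gaussVal]

lemma gaussVal_nonpos_of_monic {q : K̄[X]} (hq : q.Monic) : S.gaussVal q ≤ 0 := by
  simpa [hq.coeff_natDegree, S.v_one] using gaussVal_le_v_coeff (S := S) q q.natDegree

lemma gaussVal_add_le_gaussVal_mul (q q' : K̄[X]) :
    S.gaussVal q + S.gaussVal q' ≤ S.gaussVal (q * q') :=
  le_gaussVal fun j => by
    rw [coeff_mul, ← val_apply]
    refine S.val.map_le_sum fun p _ => ?_
    rw [S.val.map_mul]
    exact add_le_add (gaussVal_le_v_coeff q p.1) (gaussVal_le_v_coeff q' p.2)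

lemma sum_gaussVal_le_gaussVal_prod (s : Multiset K̄[X]) :
    (s.map S.gaussVal).sum ≤ S.gaussVal s.prod := by
  induction s using Multiset.induction with
  | empty => simpa [S.v_one] using (gaussVal_C (S := S) 1).ge
  | cons a s ih =>
    rw [Multiset.map_cons, Multiset.sum_cons, Multiset.prod_cons]
    exact (add_le_add le_rfl ih).trans (gaussVal_add_le_gaussVal_mul a s.prod)

lemma min_zero_le_gaussVal_X_sub_C (b : K̄) : min 0 (S.v b) ≤ S.gaussVal (X - C b) :=
  le_gaussVal fun j => by
    rcases j with _ | _ | j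
    · simp [← val_apply]
    · simp [S.v_one]
    · simp [coeff_X, ← val_apply]

/-- Over `K̄` the minimal polynomial of `x` splits into linear factors `X - x'` over the
conjugates `x'` of `x`, all of valuation `v(x)`. -/
lemma nsmul_min_zero_le_gaussVal_minpoly (x : K̄) :
    (minpoly K x).natDegree • min 0 (S.v x)
      ≤ S.gaussVal ((minpoly K x).map (algebraMap K K̄)) := by
  have hmonic : (minpoly K x).Monic :=
    minpoly.monic (Algebra.IsIntegral.isIntegral (R := K) x)
  rw [(IsAlgClosed.splits _).eq_prod_roots_of_monic (hmonic.map _)]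
  refine le_trans ?_ (sum_gaussVal_le_gaussVal_prod _)
  have hcard : (((minpoly K x).aroots K̄).map fun b => S.gaussVal (X - C b)).card
      = (minpoly K x).natDegree := by
    rw [Multiset.card_map, IsAlgClosed.card_aroots_eq_natDegree]
  rw [Multiset.map_map, ← hcard]
  refine Multiset.card_nsmul_le_sum fun c hc => ?_
  obtain ⟨b, hb, rfl⟩ := Multiset.mem_map.mp hc
  rw [← S.v_eq_of_mem_aroots_minpoly hb]
  exact min_zero_le_gaussVal_X_sub_C b

/-- In `x^d + ∑_{j<d} c_j x^j = 0` with `v(x) < 0`, the leading term would have strictly the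
smallest valuation. -/
lemma v_nonneg_of_evalK_eq_zero {g : S.integers[X]} (hg : g.Monic) {x : K̄}
    (hx : S.evalK g x = 0) : 0 ≤ S.v x := by
  by_contra! hneg
  obtain ⟨q, hq⟩ := WithTop.ne_top_iff_exists.mp (hneg.trans_le le_top).ne
  have hq0 : q < 0 := by exact_mod_cast hq ▸ hneg
  set P := g.map S.integers.subtype
  set d := g.natDegree
  have hPdeg : P.natDegree = d := natDegree_map_eq_of_injective Subtype.val_injective g
  have hlower :
      ((d • q : ℚ) : WithTop ℚ) < S.val (∑ j ∈ Finset.range d, P.coeff j • x ^ j) := by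
    refine S.val.map_lt_sum' (WithTop.coe_lt_top _) fun j hj => ?_
    have hcoeff : 0 ≤ S.v (algebraMap K K̄ (P.coeff j)) := by
      rw [coeff_map]
      exact (g.coeff j).2
    rw [Algebra.smul_def (P.coeff j), S.val.map_mul, S.val.map_pow, val_apply, val_apply, ← hq,
      ← WithTop.coe_nsmul]
    refine lt_add_of_nonneg_of_lt hcoeff (WithTop.coe_lt_coe.mpr ?_)
    rw [nsmul_eq_mul, nsmul_eq_mul]
    exact mul_lt_mul_of_neg_right (by exact_mod_cast Finset.mem_range.mp hj) hq0
  have hlead : S.val (P.coeff d • x ^ d) = ((d • q : ℚ) : WithTop ℚ) := by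
    rw [show P.coeff d = 1 by simp [P, d, hg.coeff_natDegree], one_smul, S.val.map_pow,
      val_apply, ← hq, WithTop.coe_nsmul]
  have hval : S.val (S.evalK g x) = ((d • q : ℚ) : WithTop ℚ) := by
    rw [evalK, aeval_eq_sum_range, hPdeg, Finset.sum_range_succ,
      S.val.map_add_eq_of_lt_right (hlead ▸ hlower), hlead]
  rw [hx, S.val.map_zero] at hval
  exact WithTop.top_ne_coe hval

lemma vPoly_eq_gaussVal (g : S.integers[X]) :
    S.vPoly g = S.gaussVal ((g.map S.integers.subtype).map (algebraMap K K̄)) := by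
  have hdeg : ((g.map S.integers.subtype).map (algebraMap K K̄)).natDegree = g.natDegree := by
    rw [natDegree_map, natDegree_map_eq_of_injective Subtype.val_injective]
  simp only [vPoly, gaussVal, hdeg, coeff_map]
  rfl

lemma exists_map_eq_minpoly_of_v_nonneg {x : K̄} (hx : 0 ≤ S.v x) :
    ∃ G : S.integers[X], G.map S.integers.subtype = minpoly K x := by
  have hgauss : 0 ≤ S.gaussVal ((minpoly K x).map (algebraMap K K̄)) := by
    simpa [min_eq_left hx] using nsmul_min_zero_le_gaussVal_minpoly (S := S) x
  have hsub : ((minpoly K x).coeffs : Set K) ⊆ S.integers := by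
    intro c hc
    obtain ⟨j, -, rfl⟩ := mem_coeffs_iff.mp hc
    have hj := hgauss.trans (gaussVal_le_v_coeff _ j)
    rwa [coeff_map] at hj
  exact ⟨_, map_toSubring _ _ hsub⟩

/-- Termwise `v(β - ρ) = min(v(θ - ρ), v(θ - β))`, by the ultrametric inequality. -/
lemma v_aeval_minpoly_eq_sum_min {θ β : K̄}
    (hβ : ∀ ρ ∈ (minpoly K θ).aroots K̄, S.v (ρ - β) ≤ S.v (θ - β)) :
    S.v (aeval β (minpoly K θ))
      = (((minpoly K θ).aroots K̄).map fun ρ => min (S.v (θ - ρ)) (S.v (θ - β))).sum := by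
  rw [S.v_aeval_eq_sum_aroots (minpoly.monic (Algebra.IsIntegral.isIntegral (R := K) θ))]
  refine congrArg Multiset.sum (Multiset.map_congr rfl fun ρ hρ => ?_)
  have hsub : ρ - β = (θ - β) - (θ - ρ) := by ring
  rw [← val_apply, S.val.map_sub_swap, val_apply, hsub]
  exact S.val.map_sub_eq_min_of_map_sub_le (hsub ▸ hβ ρ hρ)

lemma exists_algEquiv_forall_v_sub_le (θ β : K̄) :
    ∃ σ : K̄ ≃ₐ[K] K̄, ∀ ρ ∈ (minpoly K θ).aroots K̄, S.v (ρ - σ β) ≤ S.v (θ - σ β) := by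
  have hne : (minpoly K θ).aroots K̄ ≠ 0 := by
    rw [← Multiset.card_pos, IsAlgClosed.card_aroots_eq_natDegree]
    exact minpoly.natDegree_pos (Algebra.IsIntegral.isIntegral (R := K) θ)
  obtain ⟨ρ₀, hρ₀, hmax⟩ := Multiset.exists_max_image (fun ρ => S.v (ρ - β)) hne
  obtain ⟨τ, hτ⟩ := exists_algEquiv_apply_eq_of_mem_aroots_minpoly hρ₀
  refine ⟨τ.symm, fun ρ hρ => ?_⟩
  rw [← S.v_algEquiv τ, ← S.v_algEquiv τ (θ - _), map_sub, map_sub, hτ,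
    AlgEquiv.apply_symm_apply]
  exact hmax _ (algEquiv_apply_mem_aroots_minpoly τ hρ)

end OkutsuSetup

namespace OkutsuSetup.OkutsuData

variable {K : Type} [Field K] [CharZero K] {S : OkutsuSetup K} {θ : AlgebraicClosure K} {n : ℕ}
  (D : OkutsuData S θ n) {i : ℕ}

local notation "K̄" => AlgebraicClosure K

lemma m_le_natDegree (h1 : 1 ≤ i) (h2 : i ≤ D.r + 1) {β : K̄}
    (hβ : D.μ (i - 1) < S.v (θ - β)) : D.m i ≤ (minpoly K β).natDegree :=
  (D.m_isLeast i h1 h2).2 ⟨β, rfl, hβ⟩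

lemma mu_pred_lt (h1 : 1 ≤ i) (h2 : i ≤ D.r + 1) : D.μ (i - 1) < D.μ i := by
  obtain ⟨η, hη, hηv⟩ := (D.m_isLeast i h1 h2).1
  exact hηv.trans_le ((D.mu_isGreatest i h1 h2).2 ⟨η, hη, rfl⟩)

lemma mu_nonneg (h : i ≤ D.r + 1) : 0 ≤ D.μ i := by
  induction i with
  | zero => exact D.mu_zero.ge
  | succ i ih => exact (ih (by omega)).trans (D.mu_pred_lt (by omega) h).le

lemma m_pos (h1 : 1 ≤ i) (h2 : i ≤ D.r + 1) : 0 < D.m i := by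
  obtain ⟨η, hη, -⟩ := (D.m_isLeast i h1 h2).1
  exact hη ▸ minpoly.natDegree_pos (Algebra.IsIntegral.isIntegral (R := K) η)

lemma mu_ne_top (hθn : (minpoly K θ).natDegree = n) (h1 : 1 ≤ i) (h2 : i ≤ D.r) :
    D.μ i ≠ ⊤ := by
  intro htop
  obtain ⟨η, hη, hηv⟩ := (D.mu_isGreatest i h1 (by omega)).1
  rw [htop, S.v_eq_top_iff, sub_eq_zero] at hηv
  have := D.m_lt_n i h1 h2
  rw [← hη, ← hηv] at this
  omega

lemma v_sub_le_mu (h1 : 1 ≤ i) (h2 : i ≤ D.r + 1) {β : K̄}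
    (hβ : (minpoly K β).natDegree ≤ D.m i) : S.v (θ - β) ≤ D.μ i := by
  rcases hβ.eq_or_lt with heq | hlt
  · exact (D.mu_isGreatest i h1 h2).2 ⟨β, heq, rfl⟩
  · by_contra! hgt
    exact hlt.not_ge (D.m_le_natDegree h1 h2 ((D.mu_pred_lt h1 h2).trans hgt))

lemma v_sub_le_mu_of_mem_aroots (h1 : 1 ≤ i) (h2 : i ≤ D.r + 1) {β ρ : K̄}
    (hβ : (minpoly K β).natDegree ≤ D.m i) (hρ : ρ ∈ (minpoly K θ).aroots K̄) :
    S.v (ρ - β) ≤ D.μ i := by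
  obtain ⟨σ, rfl⟩ := exists_algEquiv_apply_eq_of_mem_aroots_minpoly hρ
  rw [← σ.apply_symm_apply β, ← map_sub, S.v_algEquiv]
  exact D.v_sub_le_mu h1 h2 (by rwa [minpoly.algEquiv_eq])

/-- `V_i`, the largest value of `v(F(β))` for `deg β ≤ m_i`, where `F` is the minimal
polynomial of `θ`. -/
def bound (i : ℕ) : WithTop ℚ :=
  (((minpoly K θ).aroots K̄).map fun ρ => min (S.v (θ - ρ)) (D.μ i)).sum

lemma v_aeval_minpoly_le_bound (h1 : 1 ≤ i) (h2 : i ≤ D.r + 1) {β : K̄}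
    (hβ : (minpoly K β).natDegree ≤ D.m i) : S.v (aeval β (minpoly K θ)) ≤ D.bound i := by
  obtain ⟨σ, hσ⟩ := exists_algEquiv_forall_v_sub_le (S := S) θ β
  rw [← S.v_aeval_algEquiv σ, v_aeval_minpoly_eq_sum_min hσ]
  refine Multiset.sum_map_le_sum_map _ _ fun ρ _ =>
    min_le_min_left _ (D.v_sub_le_mu h1 h2 ?_)
  rwa [minpoly.algEquiv_eq]

lemma v_aeval_minpoly_eq_bound (h1 : 1 ≤ i) (h2 : i ≤ D.r + 1) {β : K̄}
    (hβ : (minpoly K β).natDegree ≤ D.m i) (hv : S.v (θ - β) = D.μ i) :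
    S.v (aeval β (minpoly K θ)) = D.bound i := by
  rw [v_aeval_minpoly_eq_sum_min fun ρ hρ => hv ▸ D.v_sub_le_mu_of_mem_aroots h1 h2 hβ hρ, hv]
  rfl

lemma bound_nonneg (hθ : 0 ≤ S.v θ) (h2 : i ≤ D.r + 1) : 0 ≤ D.bound i :=
  Multiset.sum_nonneg fun c hc => by
    obtain ⟨ρ, hρ, rfl⟩ := Multiset.mem_map.mp hc
    refine le_min ?_ (D.mu_nonneg h2)
    have hρ0 : 0 ≤ S.v ρ := S.v_eq_of_mem_aroots_minpoly hρ ▸ hθ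
    exact (le_min hθ hρ0).trans (S.val.map_sub θ ρ)

lemma bound_ne_top (hθn : (minpoly K θ).natDegree = n) (h1 : 1 ≤ i) (h2 : i ≤ D.r) :
    D.bound i ≠ ⊤ := by
  obtain ⟨q, hq⟩ := WithTop.ne_top_iff_exists.mp (D.mu_ne_top hθn h1 h2)
  refine ne_top_of_le_ne_top ?_ (Multiset.sum_le_card_nsmul _ (D.μ i) fun c hc => ?_)
  · rw [← hq, ← WithTop.coe_nsmul]
    exact WithTop.coe_ne_top
  · obtain ⟨ρ, -, rfl⟩ := Multiset.mem_map.mp hc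
    exact min_le_right _ _

/-- The term `ρ = θ` of `V_i` is `μ_i`, and the corresponding term of `v(F(σβ))` is
`v(θ - σβ) ≤ μ_i`; all other terms are bounded termwise, so equality forces `v(θ - σβ) = μ_i`. -/
lemma exists_v_sub_eq_mu_of_v_aeval_eq_bound (hθn : (minpoly K θ).natDegree = n)
    (h1 : 1 ≤ i) (h2 : i ≤ D.r) {β : K̄} (hβ : (minpoly K β).natDegree ≤ D.m i)
    (hV : S.v (aeval β (minpoly K θ)) = D.bound i) :
    ∃ σ : K̄ ≃ₐ[K] K̄, S.v (θ - σ β) = D.μ i := by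
  classical
  obtain ⟨σ, hσ⟩ := exists_algEquiv_forall_v_sub_le (S := S) θ β
  refine ⟨σ, le_antisymm (D.v_sub_le_mu h1 (by omega) (by rwa [minpoly.algEquiv_eq])) ?_⟩
  by_contra! hlt
  rw [← S.v_aeval_algEquiv σ, v_aeval_minpoly_eq_sum_min hσ] at hV
  obtain ⟨R, hR⟩ : ∃ R, (minpoly K θ).aroots K̄ = θ ::ₘ R :=
    ⟨_, (Multiset.cons_erase (mem_aroots.mpr ⟨minpoly.ne_zero
      (Algebra.IsIntegral.isIntegral (R := K) θ), minpoly.aeval K θ⟩)).symm⟩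
  have hfin := D.bound_ne_top hθn h1 h2
  simp only [bound, hR, Multiset.map_cons, Multiset.sum_cons, sub_self, v_zero,
    min_eq_right le_top] at hV hfin
  have hle : (R.map fun ρ => min (S.v (θ - ρ)) (S.v (θ - σ β))).sum
      ≤ (R.map fun ρ => min (S.v (θ - ρ)) (D.μ i)).sum :=
    Multiset.sum_map_le_sum_map _ _ fun ρ _ => min_le_min_left _ hlt.le
  exact (WithTop.add_lt_add_of_lt_of_le
    (ne_top_of_le_ne_top (WithTop.add_ne_top.mp hfin).2 hle) hlt hle).ne hV

def SatisfiesBound (i : ℕ) (g : K[X]) : Prop :=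
  (minpoly K θ).natDegree • S.v (aeval θ g)
    ≤ (minpoly K θ).natDegree • S.gaussVal (g.map (algebraMap K K̄)) + g.natDegree • D.bound i

lemma satisfiesBound_zero : D.SatisfiesBound i 0 := by
  simp [SatisfiesBound, gaussVal]

lemma satisfiesBound_C (c : K) : D.SatisfiesBound i (C c) := by
  simp [SatisfiesBound, gaussVal_C]

lemma satisfiesBound_mul {a b : K[X]} (ha0 : a ≠ 0) (hb0 : b ≠ 0) (ha : D.SatisfiesBound i a)
    (hb : D.SatisfiesBound i b) : D.SatisfiesBound i (a * b) := by
  unfold SatisfiesBound at *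
  set N := (minpoly K θ).natDegree
  rw [map_mul, S.v_mul, natDegree_mul ha0 hb0, Polynomial.map_mul, smul_add, add_nsmul]
  calc N • S.v (aeval θ a) + N • S.v (aeval θ b)
      ≤ (N • S.gaussVal (a.map (algebraMap K K̄)) + a.natDegree • D.bound i)
        + (N • S.gaussVal (b.map (algebraMap K K̄)) + b.natDegree • D.bound i) :=
        add_le_add ha hb
    _ = N • (S.gaussVal (a.map (algebraMap K K̄)) + S.gaussVal (b.map (algebraMap K K̄)))
        + (a.natDegree • D.bound i + b.natDegree • D.bound i) := by
        rw [smul_add]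
        abel
    _ ≤ _ := add_le_add_left (nsmul_le_nsmul_right (gaussVal_add_le_gaussVal_mul _ _) N) _

/-- For `v(b) ≥ 0` this is the bound `v(F(b)) ≤ V_i` transported by the resultant identity;
for `v(b) < 0` every factor `θ - b'` has valuation `v(b)`, and so does every root in the
Gauss valuation. -/
lemma satisfiesBound_minpoly (hθ : 0 ≤ S.v θ) (h1 : 1 ≤ i) (h2 : i ≤ D.r + 1) {b : K̄}
    (hb : (minpoly K b).natDegree ≤ D.m i) : D.SatisfiesBound i (minpoly K b) := by
  unfold SatisfiesBound
  have hgauss := nsmul_min_zero_le_gaussVal_minpoly (S := S) b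
  have hbound := nsmul_nonneg (D.bound_nonneg hθ h2) (minpoly K b).natDegree
  rcases le_or_gt 0 (S.v b) with hb0 | hb0
  · rw [min_eq_left hb0, smul_zero] at hgauss
    rw [S.natDegree_nsmul_v_aeval_minpoly_comm]
    exact (nsmul_le_nsmul_right (D.v_aeval_minpoly_le_bound h1 h2 hb) _).trans
      (le_add_of_nonneg_left (nsmul_nonneg hgauss _))
  · rw [min_eq_right hb0.le] at hgauss
    have hterm : ∀ b' ∈ (minpoly K b).aroots K̄, S.v (θ - b') = S.v b' := fun b' hb' =>
      S.val.map_sub_eq_of_lt_right ((S.v_eq_of_mem_aroots_minpoly hb').trans_lt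
        (hb0.trans_le hθ))
    have heval : S.v (aeval θ (minpoly K b)) = (minpoly K b).natDegree • S.v b := by
      rw [S.v_aeval_eq_sum_aroots (minpoly.monic (Algebra.IsIntegral.isIntegral (R := K) b)),
        Multiset.map_congr rfl hterm]
      exact sum_map_aroots_minpoly_of_invariant b S.v S.v_algEquiv
    rw [heval]
    exact (nsmul_le_nsmul_right hgauss _).trans (le_add_of_nonneg_right hbound)

/-- Every polynomial of degree at most `m_i` is a constant times a product of minimal
polynomials of degree at most `m_i`. -/
lemma satisfiesBound_of_natDegree_le (hθ : 0 ≤ S.v θ) (h1 : 1 ≤ i) (h2 : i ≤ D.r + 1)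
    (g : K[X]) (hg : g.natDegree ≤ D.m i) : D.SatisfiesBound i g := by
  induction g using WfDvdMonoid.induction_on_irreducible with
  | zero => exact D.satisfiesBound_zero
  | unit u hu =>
    obtain ⟨c, -, rfl⟩ := Polynomial.isUnit_iff.mp hu
    exact D.satisfiesBound_C c
  | mul a p ha0 hp ih =>
    rw [natDegree_mul hp.ne_zero ha0] at hg
    obtain ⟨b, hb⟩ :=
      IsAlgClosed.exists_aeval_eq_zero K̄ p (degree_pos_of_irreducible hp).ne'
    have hmin := minpoly.eq_of_irreducible hp hb
    have hlc : p.leadingCoeff ≠ 0 := leadingCoeff_ne_zero.mpr hp.ne_zero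
    have hp_eq : p = C p.leadingCoeff * minpoly K b := by
      rw [← hmin, mul_comm, mul_assoc, ← C_mul, inv_mul_cancel₀ hlc, C_1, mul_one]
    have hbdeg : (minpoly K b).natDegree ≤ D.m i := by
      rw [← hmin, natDegree_mul_C (inv_ne_zero hlc)]
      omega
    have hp_bound : D.SatisfiesBound i p := by
      rw [hp_eq]
      exact D.satisfiesBound_mul (C_ne_zero.mpr hlc) (minpoly.ne_zero
        (Algebra.IsIntegral.isIntegral (R := K) b)) (D.satisfiesBound_C _)
        (D.satisfiesBound_minpoly hθ h1 h2 hbdeg)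
    exact D.satisfiesBound_mul hp.ne_zero ha0 hp_bound (ih (by omega))

lemma v_evalK_le_of_map_eq_minpoly (hθ : 0 ≤ S.v θ) (h1 : 1 ≤ i) (h2 : i ≤ D.r + 1) {α : K̄}
    (hαdeg : (minpoly K α).natDegree = D.m i) (hαv : S.v (θ - α) = D.μ i)
    {G : S.integers[X]} (hG : G.map S.integers.subtype = minpoly K α)
    (g : S.integers[X]) (hg : g.natDegree = D.m i) :
    S.v (S.evalK g θ) ≤ S.v (S.evalK G θ) + S.vPoly g := by
  have hN : 0 < (minpoly K θ).natDegree :=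
    minpoly.natDegree_pos (Algebra.IsIntegral.isIntegral (R := K) θ)
  have hgdeg : (g.map S.integers.subtype).natDegree = D.m i := by
    rw [natDegree_map_eq_of_injective Subtype.val_injective, hg]
  have hGθ : (minpoly K θ).natDegree • S.v (S.evalK G θ) = D.m i • D.bound i := by
    rw [evalK, hG, S.natDegree_nsmul_v_aeval_minpoly_comm, hαdeg,
      D.v_aeval_minpoly_eq_bound h1 h2 hαdeg.le hαv]
  have hgθ := D.satisfiesBound_of_natDegree_le hθ h1 h2 _ hgdeg.le
  rw [SatisfiesBound, hgdeg, ← vPoly_eq_gaussVal, ← hGθ, add_comm] at hgθ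
  rwa [← WithTop.nsmul_le_nsmul_iff_right hN.ne', smul_add]

/-- Testing the divisor inequality against the minimal polynomial of an `α` of degree `m_i`
with `v(θ - α) = μ_i`, which has coefficients in `𝓞`. -/
lemma nsmul_bound_le_of_forall_v_evalK_le (hθ : 0 ≤ S.v θ) (h1 : 1 ≤ i) (h2 : i ≤ D.r + 1)
    {G : S.integers[X]} (hG : ∀ g : S.integers[X], g.natDegree = D.m i →
      S.v (S.evalK g θ) ≤ S.v (S.evalK G θ) + S.vPoly g) :
    D.m i • D.bound i ≤ (minpoly K θ).natDegree • S.v (S.evalK G θ) := by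
  obtain ⟨α, hαdeg, hαv⟩ := (D.mu_isGreatest i h1 h2).1
  have hα : 0 ≤ S.v α := by
    have h := S.val.map_sub θ (θ - α)
    rw [sub_sub_cancel] at h
    have hαμ : 0 ≤ S.v (θ - α) := hαv ▸ D.mu_nonneg h2
    exact (le_min hθ hαμ).trans h
  obtain ⟨Gα, hGα⟩ := exists_map_eq_minpoly_of_v_nonneg hα
  have hGαdeg : Gα.natDegree = D.m i := by
    rw [← natDegree_map_eq_of_injective (f := S.integers.subtype) Subtype.val_injective Gα,
      hGα, hαdeg]
  have hvPoly : S.vPoly Gα ≤ 0 := by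
    rw [vPoly_eq_gaussVal, hGα]
    exact gaussVal_nonpos_of_monic
      ((minpoly.monic (Algebra.IsIntegral.isIntegral (R := K) α)).map _)
  calc D.m i • D.bound i = (minpoly K θ).natDegree • S.v (S.evalK Gα θ) := by
        rw [evalK, hGα, S.natDegree_nsmul_v_aeval_minpoly_comm, hαdeg,
          D.v_aeval_minpoly_eq_bound h1 h2 hαdeg.le hαv]
    _ ≤ _ := nsmul_le_nsmul_right ((hG Gα hGαdeg).trans (add_le_of_nonpos_right hvPoly)) _

/-- Split `Q = minpoly(b) · q`. Both factors satisfy the degree-weighted bound, which the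
product attains, so `v(F(b)) = V_i`; then a conjugate of `b` lies at distance `μ_i` from `θ`,
so `deg b ≥ m_i` and `q = 1`. -/
lemma exists_eq_minpoly_of_nsmul_bound_le (hθn : (minpoly K θ).natDegree = n)
    (hθ : 0 ≤ S.v θ) (h1 : 1 ≤ i) (h2 : i ≤ D.r) {Q : K[X]} (hQ : Q.Monic)
    (hQdeg : Q.natDegree = D.m i)
    (hQθ : D.m i • D.bound i ≤ (minpoly K θ).natDegree • S.v (aeval θ Q)) :
    ∃ α : K̄, (minpoly K α).natDegree = D.m i ∧ S.v (θ - α) = D.μ i ∧ Q = minpoly K α := by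
  have hm := D.m_pos h1 (by omega)
  obtain ⟨b, hb⟩ := IsAlgClosed.exists_aeval_eq_zero K̄ Q (by
    rw [degree_eq_natDegree hQ.ne_zero, hQdeg]
    exact_mod_cast hm.ne')
  obtain ⟨q, hq⟩ := minpoly.dvd K b hb
  have hbmonic := minpoly.monic (Algebra.IsIntegral.isIntegral (R := K) b)
  have hqmonic : q.Monic := hbmonic.of_mul_monic_left (hq ▸ hQ)
  have hdeg : (minpoly K b).natDegree + q.natDegree = D.m i := by
    rw [← hQdeg, hq, hbmonic.natDegree_mul hqmonic]
  have hb_le : (minpoly K θ).natDegree • S.v (aeval θ (minpoly K b))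
      ≤ (minpoly K b).natDegree • D.bound i := by
    rw [S.natDegree_nsmul_v_aeval_minpoly_comm]
    exact nsmul_le_nsmul_right (D.v_aeval_minpoly_le_bound h1 (by omega) (by omega)) _
  have hq_le : (minpoly K θ).natDegree • S.v (aeval θ q) ≤ q.natDegree • D.bound i :=
    (D.satisfiesBound_of_natDegree_le hθ h1 (by omega) q (by omega)).trans
      (add_le_of_nonpos_left (nsmul_nonpos (gaussVal_nonpos_of_monic (hqmonic.map _)) _))
  have hq_fin : q.natDegree • D.bound i ≠ ⊤ := by
    obtain ⟨c, hc⟩ := WithTop.ne_top_iff_exists.mp (D.bound_ne_top hθn h1 h2)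
    rw [← hc, ← WithTop.coe_nsmul]
    exact WithTop.coe_ne_top
  rw [hq, map_mul, S.v_mul, smul_add, ← hdeg, add_nsmul] at hQθ
  have hb_eq := WithTop.eq_of_add_le_add hb_le hq_le hq_fin hQθ
  rw [S.natDegree_nsmul_v_aeval_minpoly_comm] at hb_eq
  have hbpos : 0 < (minpoly K b).natDegree :=
    minpoly.natDegree_pos (Algebra.IsIntegral.isIntegral (R := K) b)
  have hVb : S.v (aeval b (minpoly K θ)) = D.bound i :=
    le_antisymm ((WithTop.nsmul_le_nsmul_iff_right hbpos.ne').mp hb_eq.le)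
      ((WithTop.nsmul_le_nsmul_iff_right hbpos.ne').mp hb_eq.ge)
  obtain ⟨σ, hσ⟩ := D.exists_v_sub_eq_mu_of_v_aeval_eq_bound hθn h1 h2 (by omega) hVb
  have hmb : D.m i ≤ (minpoly K b).natDegree := by
    rw [← minpoly.algEquiv_eq σ b]
    exact D.m_le_natDegree h1 (by omega) (hσ ▸ D.mu_pred_lt h1 (by omega))
  have hq1 : q = 1 := hqmonic.natDegree_eq_zero.mp (by omega)
  refine ⟨σ b, ?_, hσ, ?_⟩ <;> rw [minpoly.algEquiv_eq]
  · omega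
  · rw [hq, hq1, mul_one]

end OkutsuSetup.OkutsuData

open OkutsuSetup in
/-- Let `F ∈ 𝓞[x]` be monic irreducible of degree `n` with root `θ`,
of depth `r`, with Okutsu degrees `m_1 < ⋯ < m_r < n`.  Let `F_1, …, F_r ∈ 𝓞[x]` be monic
polynomials with `deg F_i = m_i`.  Then `[F_1, …, F_r]` is an Okutsu frame of `F` iff each
`F_i` is a divisor polynomial of `F` of degree `m_i`. -/
theorem okutsu_stmt_13 {K : Type} [Field K] [CharZero K] (S : OkutsuSetup K)
    (F : Polynomial S.integers) (hFmonic : F.Monic)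
    (hFirr : Irreducible (F.map S.integers.subtype))
    (n : ℕ) (hFdeg : F.natDegree = n)
    (θ : AlgebraicClosure K) (hθ : S.evalK F θ = 0)
    (D : OkutsuData S θ n)
    (Fr : ℕ → Polynomial S.integers)
    (hFrMonic : ∀ i, 1 ≤ i → i ≤ D.r → (Fr i).Monic)
    (hFrDeg : ∀ i, 1 ≤ i → i ≤ D.r → (Fr i).natDegree = D.m i) :
    S.IsFrame D Fr ↔
      ∀ i, 1 ≤ i → i ≤ D.r → ∀ g : Polynomial S.integers, g.natDegree = D.m i →
        S.v (S.evalK g θ) ≤ S.v (S.evalK (Fr i) θ) + S.vPoly g := by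
  have hθK : minpoly K θ = F.map S.integers.subtype :=
    (minpoly.eq_of_irreducible_of_monic hFirr hθ (hFmonic.map _)).symm
  have hθn : (minpoly K θ).natDegree = n := by
    rw [hθK, natDegree_map_eq_of_injective Subtype.val_injective, hFdeg]
  have hθ0 : 0 ≤ S.v θ := v_nonneg_of_evalK_eq_zero hFmonic hθ
  constructor
  · intro hFrame i h1 h2 g hg
    obtain ⟨α, hαdeg, hαv, hα⟩ := hFrame i h1 h2
    exact D.v_evalK_le_of_map_eq_minpoly hθ0 h1 (by omega) hαdeg hαv hα g hg
  · intro hdiv i h1 h2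
    exact D.exists_eq_minpoly_of_nsmul_bound_le hθn hθ0 h1 h2 ((hFrMonic i h1 h2).map _)
      (by rw [natDegree_map_eq_of_injective Subtype.val_injective, hFrDeg i h1 h2])
      (D.nsmul_bound_le_of_forall_v_evalK_le hθ0 h1 (by omega) (hdiv i h1 h2))
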